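/- arXiv:2404.18857 — 2 statements merged into one kernel-verified Lean document; each statement's English description precedes it below -/
import Mathlib

section
/- Dobrushin comparison theorem (Theorem 3.3). Let I be a finite set and 𝕊 = ∏_{i∈I} 𝕊^i with each 𝕊^i a Polish space, and let X^i : x ↦ x^i be the coordinate projections. Let ρ and ρ̄ be probability measures on 𝕊 with regular conditional distributions ρ_x^i(A) = ρ(X^i ∈ A | X^{I∖{i}} = x^{I∖{i}}) and ρ̄_x^i(A) = ρ̄(X^i ∈ A | X^{I∖{i}} = x^{I∖{i}}). Define C_{ij} = (1/2) sup{‖ρ_x^i − ρ_{x̄}^i‖ : x, x̄ ∈ 𝕊, x^{I∖{j}} = x̄^{I∖{j}}} and b_j = sup_{x∈𝕊} ‖ρ_x^j − ρ̄_x^j‖. If the Dobrushin condition max_{i∈I} Σ_{j∈I} C_{ij} < 1 holds, then the matrix D := Σ_{n∈ℕ} C^n is finite, and for every J ⊆ I, ‖ρ − ρ̄‖_J ≤ Σ_{i∈J} Σ_{j∈I} D_{ij} b_j. -/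
/-!
Call `a : I → ℝ` a comparison bound for `ρ` and `ρb` if `|ρ f - ρb f| ≤ ∑ᵢ ½ δᵢ(f) aᵢ` for every
measurable `f` with `|f| ≤ 1`, where `δᵢ(f)` is the oscillation of `f` in the `i`-th coordinate.
Both measures are invariant under resampling site `i` from their own conditional distributions;
resampling with `ρc` kills the oscillation at `i` and moves at most `C i j · δᵢ(f)` of it to each
site `j`, while swapping `ρc` for `ρbc` costs `½ δᵢ(f) bᵢ`. Hence a comparison bound may be
replaced at site `i` by `bᵢ + ∑ⱼ C i j aⱼ`. With `w = D b`, so that `w = b + C w`, a sweep of these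
replacements over all sites turns the bound `w + t` into `w + r t`, where `r < 1` bounds the row
sums of `C`; starting from the trivial bound `w + 2` this shows that `w` is a comparison bound.
A function depending only on the coordinates in `J` has `δᵢ = 0` off `J` and `δᵢ ≤ 2` on `J`, so
`‖ρ - ρb‖_J ≤ ∑_{i ∈ J} wᵢ`.
-/

open MeasureTheory

/-- The total variation distance `‖μ - ν‖ = sup {|μ(h) - ν(h)| : h measurable, |h| ≤ 1}`. -/
noncomputable def tvDist {α : Type*} [MeasurableSpace α] (μ ν : Measure α) : ℝ :=
  sSup { d : ℝ | ∃ h : α → ℝ, Measurable h ∧ (∀ a, |h a| ≤ 1) ∧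
    d = |(∫ a, h a ∂μ) - ∫ a, h a ∂ν| }

/-- The local total variation distance `‖μ - ν‖_J` on a product space: the supremum of
`|μ(h) - ν(h)|` over measurable `h` with `|h| ≤ 1` depending only on the coordinates in `J`. -/
noncomputable def localTV {I : Type*} {S : I → Type*} [∀ i, MeasurableSpace (S i)]
    (J : Set I) (μ ν : Measure (∀ i, S i)) : ℝ :=
  sSup { d : ℝ | ∃ h : (∀ i, S i) → ℝ, Measurable h ∧ (∀ x, |h x| ≤ 1) ∧
    (∀ x x', (∀ i ∈ J, x i = x' i) → h x = h x') ∧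
    d = |(∫ x, h x ∂μ) - ∫ x, h x ∂ν| }

open ProbabilityTheory
open scoped Matrix

lemma exists_abs_sub_le_of_abs_sub_le {α : Type*} {g : α → ℝ} {δ : ℝ}
    (hg : ∀ y y', |g y - g y'| ≤ δ) : ∃ c, ∀ y, |g y - c| ≤ δ / 2 := by
  refine ⟨(⨆ y, g y) - δ / 2, fun y => abs_le.mpr ⟨?_, ?_⟩⟩
  · have : Nonempty α := ⟨y⟩
    have : (⨆ y', g y') ≤ g y + δ := ciSup_le fun y' => by linarith [(abs_le.mp (hg y' y)).2]
    linarith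
  · have : g y ≤ ⨆ y', g y' :=
      le_ciSup ⟨g y + δ, by rintro _ ⟨y', rfl⟩; linarith [(abs_le.mp (hg y' y)).2]⟩ y
    linarith

section TotalVariation

variable {α : Type*} [MeasurableSpace α] {μ ν : Measure α}

lemma abs_integral_le_of_forall_abs_le [IsProbabilityMeasure μ] {g : α → ℝ} {c : ℝ}
    (hg : ∀ y, |g y| ≤ c) : |∫ y, g y ∂μ| ≤ c := by
  simpa using norm_integral_le_of_norm_le_const (μ := μ) (f := g)
    (ae_of_all _ fun y => by simpa using hg y)

lemma integrable_of_forall_abs_le [IsFiniteMeasure μ] {g : α → ℝ} (hg : Measurable g) {c : ℝ}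
    (hgc : ∀ y, |g y| ≤ c) : Integrable g μ :=
  .of_bound hg.aestronglyMeasurable c (ae_of_all _ fun y => by simpa using hgc y)

lemma abs_integral_sub_integral_le_two [IsProbabilityMeasure μ] [IsProbabilityMeasure ν]
    {h : α → ℝ} (hh : ∀ a, |h a| ≤ 1) : |(∫ a, h a ∂μ) - ∫ a, h a ∂ν| ≤ 2 := by
  have := abs_sub (∫ a, h a ∂μ) (∫ a, h a ∂ν)
  linarith [abs_integral_le_of_forall_abs_le (μ := μ) hh,
    abs_integral_le_of_forall_abs_le (μ := ν) hh]

lemma tvDist_nonneg : 0 ≤ tvDist μ ν :=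
  Real.sSup_nonneg <| by rintro _ ⟨h, -, -, rfl⟩; exact abs_nonneg _

lemma tvDist_le_two [IsProbabilityMeasure μ] [IsProbabilityMeasure ν] : tvDist μ ν ≤ 2 :=
  Real.sSup_le (by rintro _ ⟨h, -, hh, rfl⟩; exact abs_integral_sub_integral_le_two hh)
    zero_le_two

lemma abs_integral_sub_integral_le_tvDist [IsProbabilityMeasure μ] [IsProbabilityMeasure ν]
    {h : α → ℝ} (hm : Measurable h) (hh : ∀ a, |h a| ≤ 1) :
    |(∫ a, h a ∂μ) - ∫ a, h a ∂ν| ≤ tvDist μ ν :=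
  le_csSup ⟨2, by rintro _ ⟨h, -, hh, rfl⟩; exact abs_integral_sub_integral_le_two hh⟩
    ⟨h, hm, hh, rfl⟩

lemma abs_integral_sub_integral_le_mul_tvDist [IsProbabilityMeasure μ] [IsProbabilityMeasure ν]
    {k : α → ℝ} (hk : Measurable k) {d : ℝ} (hkd : ∀ y, |k y| ≤ d) :
    |(∫ y, k y ∂μ) - ∫ y, k y ∂ν| ≤ d * tvDist μ ν := by
  obtain ⟨y₀⟩ := nonempty_of_isProbabilityMeasure μ
  rcases (abs_nonneg _ |>.trans (hkd y₀)).eq_or_lt with rfl | hd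
  · have hk0 : k = 0 := funext fun y => abs_nonpos_iff.mp (hkd y)
    simp [hk0]
  · have := abs_integral_sub_integral_le_tvDist (μ := μ) (ν := ν) (hk.div_const d)
      fun y => by rw [abs_div, abs_of_pos hd, div_le_one hd]; exact hkd y
    rwa [integral_div, integral_div, ← sub_div, abs_div, abs_of_pos hd, div_le_iff₀ hd,
      mul_comm] at this

lemma abs_integral_sub_integral_le_of_abs_sub_le [IsProbabilityMeasure μ]
    [IsProbabilityMeasure ν] {g : α → ℝ} (hg : Measurable g) {δ : ℝ}
    (hgδ : ∀ y y', |g y - g y'| ≤ δ) :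
    |(∫ y, g y ∂μ) - ∫ y, g y ∂ν| ≤ δ / 2 * tvDist μ ν := by
  obtain ⟨c, hc⟩ := exists_abs_sub_le_of_abs_sub_le hgδ
  have hint : ∀ m : Measure α, IsProbabilityMeasure m → Integrable g m := fun _ _ =>
    integrable_of_forall_abs_le (c := |c| + δ / 2) hg fun y => by
      linarith [abs_sub_abs_le_abs_sub (g y) c, hc y]
  have key := abs_integral_sub_integral_le_mul_tvDist (μ := μ) (ν := ν)
    (k := fun y => g y - c) (hg.sub measurable_const) hc
  rw [integral_sub (hint μ ‹_›) (integrable_const c), integral_sub (hint ν ‹_›)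
    (integrable_const c)] at key
  simpa using key

end TotalVariation

section Oscillation

variable {I : Type*} {S : I → Type*}

noncomputable def osc (i : I) (f : (∀ j, S j) → ℝ) : ℝ :=
  sSup {d | ∃ x x' : ∀ j, S j, (∀ j, j ≠ i → x j = x' j) ∧ d = |f x - f x'|}

lemma osc_nonneg (i : I) (f : (∀ j, S j) → ℝ) : 0 ≤ osc i f :=
  Real.sSup_nonneg <| by rintro _ ⟨x, x', -, rfl⟩; exact abs_nonneg _

lemma osc_le {i : I} {f : (∀ j, S j) → ℝ} {a : ℝ} (ha : 0 ≤ a)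
    (h : ∀ x x' : ∀ j, S j, (∀ j, j ≠ i → x j = x' j) → |f x - f x'| ≤ a) : osc i f ≤ a :=
  Real.sSup_le (by rintro _ ⟨x, x', hxx', rfl⟩; exact h x x' hxx') ha

lemma abs_sub_le_two {f : (∀ j, S j) → ℝ} (hf : ∀ x, |f x| ≤ 1) (x x' : ∀ j, S j) :
    |f x - f x'| ≤ 2 := by
  linarith [abs_sub (f x) (f x'), hf x, hf x']

lemma osc_le_two {f : (∀ j, S j) → ℝ} (hf : ∀ x, |f x| ≤ 1) (i : I) : osc i f ≤ 2 :=
  osc_le zero_le_two fun x x' _ => abs_sub_le_two hf x x'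

lemma abs_sub_le_osc {i : I} {f : (∀ j, S j) → ℝ} (hf : ∀ x, |f x| ≤ 1)
    {x x' : ∀ j, S j} (hxx' : ∀ j, j ≠ i → x j = x' j) : |f x - f x'| ≤ osc i f :=
  le_csSup ⟨2, by rintro _ ⟨y, y', -, rfl⟩; exact abs_sub_le_two hf y y'⟩ ⟨x, x', hxx', rfl⟩

lemma osc_eq_zero_of_forall_eq {i : I} {f : (∀ j, S j) → ℝ}
    (h : ∀ x x' : ∀ j, S j, (∀ j, j ≠ i → x j = x' j) → f x = f x') : osc i f = 0 :=
  (osc_le le_rfl fun x x' hxx' => by rw [h x x' hxx', sub_self, abs_zero]).antisymm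
    (osc_nonneg i f)

lemma abs_sub_le_sum_osc [Fintype I] [DecidableEq I] {f : (∀ j, S j) → ℝ}
    (hf : ∀ x, |f x| ≤ 1) (x x' : ∀ j, S j) : |f x - f x'| ≤ ∑ i, osc i f := by
  let hybrid (s : Finset I) : ∀ j, S j := fun j => if j ∈ s then x' j else x j
  suffices ∀ s, |f x - f (hybrid s)| ≤ ∑ i ∈ s, osc i f by
    simpa [hybrid] using this Finset.univ
  intro s
  induction s using Finset.induction_on with
  | empty => simp [hybrid]
  | insert i s hi ih =>
    have hstep : |f (hybrid s) - f (hybrid (insert i s))| ≤ osc i f :=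
      abs_sub_le_osc hf fun j hj => by simp [hybrid, hj]
    rw [Finset.sum_insert hi]
    linarith [abs_sub_le (f x) (f (hybrid s)) (f (hybrid (insert i s)))]

end Oscillation

lemma update_apply_eq_update_apply {I : Type*} [DecidableEq I] {S : I → Type*} {i j : I}
    {x x' : ∀ k, S k} (h : ∀ k, k ≠ j → x k = x' k) (y : S i) (k : I) (hk : k ≠ j) :
    Function.update x i y k = Function.update x' i y k := by
  by_cases hki : k = i
  · subst hki; simp
  · simp [hki, h k hk]

section Resampling

variable {I : Type*} [DecidableEq I] {S : I → Type*} [∀ i, MeasurableSpace (S i)]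

def IsSiteConditional (i : I) (μ : Measure (∀ j, S j)) (κ : Kernel (∀ j, S j) (S i)) : Prop :=
  ∀ A : Set (S i), MeasurableSet A → ∀ E : Set (∀ j, S j), MeasurableSet E →
    (∀ x x', (∀ j, j ≠ i → x j = x' j) → (x ∈ E ↔ x' ∈ E)) →
    μ ({x | x i ∈ A} ∩ E) = ∫⁻ x in E, κ x A ∂μ

noncomputable def resample (i : I) (κ : Kernel (∀ j, S j) (S i)) (f : (∀ j, S j) → ℝ)
    (x : ∀ j, S j) : ℝ :=
  ∫ y, f (Function.update x i y) ∂κ x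

lemma map_update_compProd_eq_self [Finite I] {i : I} {μ : Measure (∀ j, S j)}
    [IsProbabilityMeasure μ] {κ : Kernel (∀ j, S j) (S i)} [IsMarkovKernel κ]
    (hκ : IsSiteConditional i μ κ) :
    (μ ⊗ₘ κ).map (fun p => Function.update p.1 i p.2) = μ := by
  have hupd : Measurable fun p : (∀ j, S j) × S i => Function.update p.1 i p.2 :=
    measurable_update'
  have := Measure.isProbabilityMeasure_map (μ := μ ⊗ₘ κ) hupd.aemeasurable
  refine ext_of_generate_finite _ generateFrom_pi.symm isPiSystem_pi ?_ (by simp)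
  rintro _ ⟨t, ht, rfl⟩
  replace ht : ∀ j, MeasurableSet (t j) := fun j => ht j trivial
  set E := (Set.univ \ {i}).pi t
  have hE : MeasurableSet E := .pi (Set.to_countable _) fun j _ => ht j
  have hbox : Set.univ.pi t = {x | x i ∈ t i} ∩ E := by
    rw [← Set.insert_sdiff_self_of_mem (Set.mem_univ i), Set.insert_pi]
    rfl
  have hsection (x : ∀ j, S j) :
      κ x (Prod.mk x ⁻¹' ((fun p => Function.update p.1 i p.2) ⁻¹' Set.univ.pi t)) =
        E.indicator (fun x => κ x (t i)) x := by
    have hpre : Prod.mk x ⁻¹' ((fun p => Function.update p.1 i p.2) ⁻¹' Set.univ.pi t) =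
        {y | x ∈ E ∧ y ∈ t i} := by
      ext y
      simp only [Set.mem_preimage, Set.update_mem_pi_iff, Set.mem_univ, forall_const, E]
      rfl
    by_cases hx : x ∈ E <;> simp [hpre, hx]
  rw [Measure.map_apply hupd (.univ_pi ht), Measure.compProd_apply (hupd (.univ_pi ht)),
    lintegral_congr hsection, lintegral_indicator hE,
    ← hκ (t i) (ht i) E hE fun x x' hxx' => by simp +contextual [E, Set.mem_pi, hxx'], hbox]

lemma measurable_resample {i : I} {κ : Kernel (∀ j, S j) (S i)} [IsSFiniteKernel κ]
    {f : (∀ j, S j) → ℝ} (hf : Measurable f) : Measurable (resample i κ f) :=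
  (hf.comp measurable_update').stronglyMeasurable.integral_kernel_prod_right'.measurable

lemma abs_resample_le_one {i : I} {κ : Kernel (∀ j, S j) (S i)} [IsMarkovKernel κ]
    {f : (∀ j, S j) → ℝ} (hf : ∀ x, |f x| ≤ 1) (x : ∀ j, S j) : |resample i κ f x| ≤ 1 :=
  abs_integral_le_of_forall_abs_le fun _ => hf _

lemma integral_resample [Finite I] {i : I} {μ : Measure (∀ j, S j)} [IsProbabilityMeasure μ]
    {κ : Kernel (∀ j, S j) (S i)} [IsMarkovKernel κ] (hκ : IsSiteConditional i μ κ)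
    {f : (∀ j, S j) → ℝ} (hf : Measurable f) (hfb : ∀ x, |f x| ≤ 1) :
    ∫ x, resample i κ f x ∂μ = ∫ x, f x ∂μ := by
  have hupd : Measurable fun p : (∀ j, S j) × S i => Function.update p.1 i p.2 :=
    measurable_update'
  conv_rhs => rw [← map_update_compProd_eq_self hκ]
  rw [integral_map hupd.aemeasurable hf.aestronglyMeasurable,
    Measure.integral_compProd (f := fun p => f (Function.update p.1 i p.2))
      (integrable_of_forall_abs_le (hf.comp hupd) fun _ => hfb _)]
  rfl

lemma osc_resample_self {i : I} {κ : Kernel (∀ j, S j) (S i)} {f : (∀ j, S j) → ℝ}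
    (hκ : ∀ x x' : ∀ j, S j, (∀ j, j ≠ i → x j = x' j) → κ x = κ x') :
    osc i (resample i κ f) = 0 :=
  osc_eq_zero_of_forall_eq fun x x' hxx' => by
    have hupd (y : S i) : Function.update x i y = Function.update x' i y := by
      funext k
      by_cases hk : k = i
      · subst hk; simp
      · exact update_apply_eq_update_apply hxx' y k hk
    simp only [resample, hκ x x' hxx', hupd]

lemma abs_integral_update_sub_le {f : (∀ j, S j) → ℝ} (hf : Measurable f)
    (hfb : ∀ x, |f x| ≤ 1) (i : I) (x : ∀ j, S j) (μ ν : Measure (S i))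
    [IsProbabilityMeasure μ] [IsProbabilityMeasure ν] :
    |(∫ y, f (Function.update x i y) ∂μ) - ∫ y, f (Function.update x i y) ∂ν| ≤
      osc i f / 2 * tvDist μ ν :=
  abs_integral_sub_integral_le_of_abs_sub_le (hf.comp (measurable_update x))
    fun _ _ => abs_sub_le_osc hfb fun _ hj => by simp [hj]

lemma abs_integral_sub_le_resample [Finite I] {i : I} {ρ ρb : Measure (∀ j, S j)}
    [IsProbabilityMeasure ρ] [IsProbabilityMeasure ρb] {κ κb : Kernel (∀ j, S j) (S i)}
    [IsMarkovKernel κ] [IsMarkovKernel κb] (hκ : IsSiteConditional i ρ κ)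
    (hκb : IsSiteConditional i ρb κb) {β : ℝ} (hβ : ∀ x, tvDist (κ x) (κb x) ≤ β)
    {f : (∀ j, S j) → ℝ} (hf : Measurable f) (hfb : ∀ x, |f x| ≤ 1) :
    |(∫ x, f x ∂ρ) - ∫ x, f x ∂ρb| ≤
      |(∫ x, resample i κ f x ∂ρ) - ∫ x, resample i κ f x ∂ρb| + osc i f / 2 * β := by
  have hpoint (x : ∀ j, S j) : |resample i κ f x - resample i κb f x| ≤ osc i f / 2 * β :=
    (abs_integral_update_sub_le hf hfb i x _ _).trans <|
      mul_le_mul_of_nonneg_left (hβ x) (by linarith [osc_nonneg i f])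
  have hint (η : Kernel (∀ j, S j) (S i)) [IsMarkovKernel η] : Integrable (resample i η f) ρb :=
    integrable_of_forall_abs_le (measurable_resample hf) (abs_resample_le_one hfb)
  have hclose : |(∫ x, resample i κ f x ∂ρb) - ∫ x, resample i κb f x ∂ρb| ≤
      osc i f / 2 * β := by
    rw [← integral_sub (hint κ) (hint κb)]
    exact abs_integral_le_of_forall_abs_le hpoint
  rw [← integral_resample hκ hf hfb, ← integral_resample hκb hf hfb]
  linarith [abs_sub_le (∫ x, resample i κ f x ∂ρ) (∫ x, resample i κ f x ∂ρb)
    (∫ x, resample i κb f x ∂ρb)]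

lemma osc_resample_le {i j : I} {κ : Kernel (∀ j, S j) (S i)} [IsMarkovKernel κ] {c : ℝ}
    (hc0 : 0 ≤ c)
    (hκc : ∀ x x' : ∀ l, S l, (∀ l, l ≠ j → x l = x' l) → tvDist (κ x) (κ x') ≤ 2 * c)
    {f : (∀ j, S j) → ℝ} (hf : Measurable f) (hfb : ∀ x, |f x| ≤ 1) :
    osc j (resample i κ f) ≤ osc j f + c * osc i f := by
  have hosc_f := osc_nonneg i f
  refine osc_le (add_nonneg (osc_nonneg j f) (mul_nonneg hc0 hosc_f)) fun x x' hxx' => ?_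
  have hint (z : ∀ l, S l) : Integrable (fun y => f (Function.update z i y)) (κ x) :=
    integrable_of_forall_abs_le (hf.comp (measurable_update z)) fun _ => hfb _
  have hpoint : |(∫ y, f (Function.update x i y) ∂κ x) - ∫ y, f (Function.update x' i y) ∂κ x|
      ≤ osc j f := by
    rw [← integral_sub (hint x) (hint x')]
    exact abs_integral_le_of_forall_abs_le fun y =>
      abs_sub_le_osc hfb (update_apply_eq_update_apply hxx' y)
  have hkernel : |(∫ y, f (Function.update x' i y) ∂κ x) - ∫ y, f (Function.update x' i y) ∂κ x'|
      ≤ c * osc i f :=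
    (abs_integral_update_sub_le hf hfb i x' _ _).trans (by nlinarith [hκc x x' hxx'])
  exact (abs_sub_le _ _ _).trans (add_le_add hpoint hkernel)

end Resampling

lemma sum_mul_add_mul_le_sum_mul {I : Type*} [Fintype I] [DecidableEq I] {i : I}
    {δ δ' a a' c : I → ℝ} {β : ℝ} (hδ : 0 ≤ δ) (ha : 0 ≤ a) (hc : 0 ≤ c) (hδ'i : δ' i = 0)
    (hδ' : ∀ j, δ' j ≤ δ j + c j * δ i) (ha'i : β + ∑ j, c j * a j ≤ a' i)
    (ha' : ∀ j, j ≠ i → a j ≤ a' j) :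
    ∑ j, δ' j * a j + δ i * β ≤ ∑ j, δ j * a' j := by
  rw [← Finset.add_sum_erase _ _ (Finset.mem_univ i), ← Finset.add_sum_erase _ _
    (Finset.mem_univ i), hδ'i, zero_mul, zero_add]
  have hrest : ∑ j ∈ Finset.univ.erase i, δ' j * a j ≤
      ∑ j ∈ Finset.univ.erase i, δ j * a' j + δ i * ∑ j, c j * a j := by
    calc ∑ j ∈ Finset.univ.erase i, δ' j * a j
        ≤ ∑ j ∈ Finset.univ.erase i, (δ j * a' j + δ i * (c j * a j)) := by
          refine Finset.sum_le_sum fun j hj => ?_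
          have h1 := mul_le_mul_of_nonneg_right (hδ' j) (ha j)
          have h2 := mul_le_mul_of_nonneg_left (ha' j (Finset.ne_of_mem_erase hj)) (hδ j)
          linarith
      _ ≤ ∑ j ∈ Finset.univ.erase i, δ j * a' j + δ i * ∑ j, c j * a j := by
          rw [Finset.sum_add_distrib, ← Finset.mul_sum]
          exact add_le_add_right (mul_le_mul_of_nonneg_left (Finset.sum_le_sum_of_subset_of_nonneg
            (Finset.erase_subset _ _) fun j _ _ => mul_nonneg (hc j) (ha j)) (hδ i)) _
  linarith [mul_le_mul_of_nonneg_left ha'i (hδ i)]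

section ComparisonBound

variable {I : Type*} [Fintype I] {S : I → Type*} [∀ i, MeasurableSpace (S i)]
  {ρ ρb : Measure (∀ j, S j)}

def IsComparisonBound (ρ ρb : Measure (∀ j, S j)) (a : I → ℝ) : Prop :=
  ∀ f : (∀ j, S j) → ℝ, Measurable f → (∀ x, |f x| ≤ 1) →
    |(∫ x, f x ∂ρ) - ∫ x, f x ∂ρb| ≤ ∑ i, osc i f / 2 * a i

namespace IsComparisonBound

lemma mono {a a' : I → ℝ} (h : IsComparisonBound ρ ρb a) (haa' : a ≤ a') :
    IsComparisonBound ρ ρb a' := fun f hf hfb =>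
  (h f hf hfb).trans <| Finset.sum_le_sum fun i _ =>
    mul_le_mul_of_nonneg_left (haa' i) (by linarith [osc_nonneg i f])

lemma const_two [DecidableEq I] [IsProbabilityMeasure ρ] [IsProbabilityMeasure ρb] :
    IsComparisonBound ρ ρb fun _ => 2 := fun f hf hfb => by
  have hosc : 0 ≤ ∑ i, osc i f := Finset.sum_nonneg fun i _ => osc_nonneg i f
  calc |(∫ x, f x ∂ρ) - ∫ x, f x ∂ρb| ≤ (∑ i, osc i f) / 2 * tvDist ρ ρb :=
        abs_integral_sub_integral_le_of_abs_sub_le hf (abs_sub_le_sum_osc hfb)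
    _ ≤ (∑ i, osc i f) / 2 * 2 := by gcongr; exact tvDist_le_two
    _ = ∑ i, osc i f / 2 * 2 := by rw [Finset.sum_div, Finset.sum_mul]

lemma of_tendsto {a : ℕ → I → ℝ} {a' : I → ℝ} (h : ∀ n, IsComparisonBound ρ ρb (a n))
    (ha : Filter.Tendsto a Filter.atTop (nhds a')) : IsComparisonBound ρ ρb a' :=
  fun f hf hfb => ge_of_tendsto' (tendsto_finsetSum _ fun i _ =>
    (tendsto_pi_nhds.mp ha i).const_mul (osc i f / 2)) fun n => h n f hf hfb

lemma resample_step [DecidableEq I] [IsProbabilityMeasure ρ] [IsProbabilityMeasure ρb] {i : I}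
    {κ κb : Kernel (∀ j, S j) (S i)} [IsMarkovKernel κ] [IsMarkovKernel κb]
    (hκ : IsSiteConditional i ρ κ) (hκb : IsSiteConditional i ρb κb)
    (hκ_loc : ∀ x x' : ∀ j, S j, (∀ j, j ≠ i → x j = x' j) → κ x = κ x')
    {c : I → ℝ} (hc0 : 0 ≤ c)
    (hκc : ∀ j (x x' : ∀ l, S l), (∀ l, l ≠ j → x l = x' l) → tvDist (κ x) (κ x') ≤ 2 * c j)
    {β : ℝ} (hβ : ∀ x, tvDist (κ x) (κb x) ≤ β) {a a' : I → ℝ} (h : IsComparisonBound ρ ρb a)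
    (ha0 : 0 ≤ a) (ha'i : β + ∑ j, c j * a j ≤ a' i) (ha' : ∀ j, j ≠ i → a j ≤ a' j) :
    IsComparisonBound ρ ρb a' := fun f hf hfb => by
  have key := sum_mul_add_mul_le_sum_mul (δ := fun j => osc j f / 2)
    (δ' := fun j => osc j (resample i κ f) / 2)
    (fun j => div_nonneg (osc_nonneg j f) zero_le_two) ha0 hc0
    (by simp [osc_resample_self hκ_loc])
    (fun j => by linarith [osc_resample_le (hc0 j) (hκc j) hf hfb]) ha'i ha'
  linarith [abs_integral_sub_le_resample hκ hκb hβ hf hfb,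
    h (resample i κ f) (measurable_resample hf) (abs_resample_le_one hfb)]

lemma sweep [DecidableEq I] [IsProbabilityMeasure ρ] [IsProbabilityMeasure ρb]
    {κ κb : ∀ i, Kernel (∀ j, S j) (S i)} [∀ i, IsMarkovKernel (κ i)]
    [∀ i, IsMarkovKernel (κb i)] (hκ : ∀ i, IsSiteConditional i ρ (κ i))
    (hκb : ∀ i, IsSiteConditional i ρb (κb i))
    (hκ_loc : ∀ i (x x' : ∀ j, S j), (∀ j, j ≠ i → x j = x' j) → κ i x = κ i x')
    {C : Matrix I I ℝ} (hC0 : ∀ i j, 0 ≤ C i j)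
    (hC : ∀ i j (x x' : ∀ l, S l), (∀ l, l ≠ j → x l = x' l) →
      tvDist (κ i x) (κ i x') ≤ 2 * C i j)
    {b : I → ℝ} (hb : ∀ i x, tvDist (κ i x) (κb i x) ≤ b i)
    {w : I → ℝ} (hw0 : 0 ≤ w) (hw : w = b + C *ᵥ w)
    {r : ℝ} (hr0 : 0 ≤ r) (hr1 : r ≤ 1) (hrow : ∀ i, ∑ j, C i j ≤ r) {t : ℝ} (ht : 0 ≤ t)
    (h : IsComparisonBound ρ ρb fun i => w i + t) :
    IsComparisonBound ρ ρb fun i => w i + r * t := by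
  have hrt : r * t ≤ t := mul_le_of_le_one_left ht hr1
  suffices ∀ s : Finset I, IsComparisonBound ρ ρb fun j => w j + if j ∈ s then r * t else t by
    simpa using this Finset.univ
  intro s
  induction s using Finset.induction_on with
  | empty => simpa using h
  | insert i s _ ih =>
    refine ih.resample_step (hκ i) (hκb i) (hκ_loc i) (hC0 i) (hC i) (hb i)
      (fun j => add_nonneg (hw0 j) (by split_ifs <;> positivity)) ?_
      (fun j hj => by simp [hj])
    calc b i + ∑ j, C i j * (w j + if j ∈ s then r * t else t)
        ≤ b i + ∑ j, C i j * (w j + t) := by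
          gcongr with j
          · exact hC0 i j
          · split_ifs <;> linarith
      _ = w i + (∑ j, C i j) * t := by
          rw [congrFun hw i]
          simp [Matrix.mulVec, dotProduct, mul_add, Finset.sum_add_distrib, Finset.sum_mul]
          ring
      _ ≤ w i + if i ∈ insert i s then r * t else t := by
          simpa using mul_le_mul_of_nonneg_right (hrow i) ht

theorem of_dobrushin [DecidableEq I] [IsProbabilityMeasure ρ] [IsProbabilityMeasure ρb]
    {κ κb : ∀ i, Kernel (∀ j, S j) (S i)} [∀ i, IsMarkovKernel (κ i)]
    [∀ i, IsMarkovKernel (κb i)] (hκ : ∀ i, IsSiteConditional i ρ (κ i))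
    (hκb : ∀ i, IsSiteConditional i ρb (κb i))
    (hκ_loc : ∀ i (x x' : ∀ j, S j), (∀ j, j ≠ i → x j = x' j) → κ i x = κ i x')
    {C : Matrix I I ℝ} (hC0 : ∀ i j, 0 ≤ C i j)
    (hC : ∀ i j (x x' : ∀ l, S l), (∀ l, l ≠ j → x l = x' l) →
      tvDist (κ i x) (κ i x') ≤ 2 * C i j)
    {b : I → ℝ} (hb : ∀ i x, tvDist (κ i x) (κb i x) ≤ b i)
    {w : I → ℝ} (hw0 : 0 ≤ w) (hw : w = b + C *ᵥ w)
    {r : ℝ} (hr0 : 0 ≤ r) (hr1 : r < 1) (hrow : ∀ i, ∑ j, C i j ≤ r) :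
    IsComparisonBound ρ ρb w := by
  refine of_tendsto (a := fun n i => w i + r ^ n * 2) (fun n => ?_) ?_
  · induction n with
    | zero => exact const_two.mono fun i => by simpa using hw0 i
    | succ n ih =>
      simpa [pow_succ', mul_assoc] using ih.sweep hκ hκb hκ_loc hC0 hC hb hw0 hw hr0 hr1.le hrow
        (by positivity)
  · exact tendsto_pi_nhds.mpr fun i => by
      simpa using ((tendsto_pow_atTop_nhds_zero_of_lt_one hr0 hr1).mul_const 2).const_add (w i)

end IsComparisonBound

end ComparisonBound

lemma exists_nonneg_lt_one_forall_le {ι : Type*} [Finite ι] {g : ι → ℝ} (hg : ∀ i, g i < 1) :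
    ∃ r, 0 ≤ r ∧ r < 1 ∧ ∀ i, g i ≤ r := by
  rcases isEmpty_or_nonempty ι with hι | hι
  · exact ⟨0, le_rfl, one_pos, isEmptyElim⟩
  · obtain ⟨i₀, hi₀⟩ := Finite.exists_max g
    exact ⟨max 0 (g i₀), le_max_left _ _, max_lt one_pos (hg i₀),
      fun i => (hi₀ i).trans (le_max_right _ _)⟩

section Neumann

attribute [local instance] Matrix.linftyOpNormedAddCommGroup Matrix.linftyOpNormedRing

lemma Matrix.linfty_opNorm_lt_one {I : Type*} [Fintype I] {C : Matrix I I ℝ}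
    (hC0 : ∀ i j, 0 ≤ C i j) (hrow : ∀ i, ∑ j, C i j < 1) : ‖C‖ < 1 := by
  rw [Matrix.linfty_opNorm_def, ← NNReal.coe_one, NNReal.coe_lt_coe,
    Finset.sup_lt_iff one_pos]
  intro i _
  rw [← NNReal.coe_lt_coe, NNReal.coe_sum]
  simpa [Real.norm_of_nonneg (hC0 i _)] using hrow i

lemma Matrix.exists_hasSum_pow {I : Type*} [Fintype I] [DecidableEq I] {C : Matrix I I ℝ}
    (hC0 : ∀ i j, 0 ≤ C i j) (hrow : ∀ i, ∑ j, C i j < 1) :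
    ∃ D : Matrix I I ℝ, (∀ i j, HasSum (fun n => (C ^ n) i j) (D i j)) ∧ D = 1 + C * D ∧
      ∀ i j, 0 ≤ D i j := by
  have hnorm := Matrix.linfty_opNorm_lt_one hC0 hrow
  -- the product completeness instance matches the `L∞` uniformity only up to unfolding
  have : HasSummableGeomSeries (Matrix I I ℝ) :=
    @instHasSummableGeomSeriesOfCompleteSpace _ _ (Matrix.instCompleteSpace I I ℝ)
  have hsum := (summable_geometric_of_norm_lt_one hnorm).hasSum
  have hentry (i j : I) : HasSum (fun n => (C ^ n) i j) ((∑' n, C ^ n) i j) :=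
    Pi.hasSum.mp (Pi.hasSum.mp hsum i) j
  have hpow_nonneg (n : ℕ) : ∀ i j, 0 ≤ (C ^ n) i j := by
    induction n with
    | zero => intro i j; rw [pow_zero, Matrix.one_apply]; split_ifs <;> norm_num
    | succ n ih =>
      intro i j
      rw [pow_succ', Matrix.mul_apply]
      exact Finset.sum_nonneg fun k _ => mul_nonneg (hC0 i k) (ih k j)
  refine ⟨∑' n, C ^ n, hentry, ?_, fun i j => (hentry i j).nonneg fun n => hpow_nonneg n i j⟩
  have := mul_neg_geom_series C hnorm
  rw [sub_mul, one_mul, sub_eq_iff_eq_add'] at this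
  exact this.trans (add_comm _ _)

end Neumann

lemma localTV_le_sum_of_isComparisonBound {I : Type*} [Fintype I] {S : I → Type*}
    [∀ i, MeasurableSpace (S i)] {ρ ρb : Measure (∀ j, S j)} {a : I → ℝ} (ha0 : 0 ≤ a)
    (h : IsComparisonBound ρ ρb a) (J : Finset I) : localTV (↑J : Set I) ρ ρb ≤ ∑ i ∈ J, a i := by
  refine Real.sSup_le ?_ (Finset.sum_nonneg fun i _ => ha0 i)
  rintro _ ⟨f, hf, hfb, hfJ, rfl⟩
  have hosc_off (i : I) (hi : i ∉ J) : osc i f = 0 :=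
    osc_eq_zero_of_forall_eq fun x x' hxx' =>
      hfJ x x' fun j hj => hxx' j (by rintro rfl; exact hi hj)
  calc |(∫ x, f x ∂ρ) - ∫ x, f x ∂ρb| ≤ ∑ i, osc i f / 2 * a i := h f hf hfb
    _ = ∑ i ∈ J, osc i f / 2 * a i := by
      refine (Finset.sum_subset (Finset.subset_univ J) fun i _ hi => ?_).symm
      rw [hosc_off i hi, zero_div, zero_mul]
    _ ≤ ∑ i ∈ J, a i := Finset.sum_le_sum fun i _ =>
      mul_le_of_le_one_left (ha0 i) (by linarith [osc_le_two hfb i])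

theorem dobrushin_comparison_general
    {I : Type*} [Fintype I] [DecidableEq I]
    {S : I → Type*} [∀ i, MeasurableSpace (S i)]
    (ρ ρb : Measure (∀ i, S i)) [IsProbabilityMeasure ρ] [IsProbabilityMeasure ρb]
    (ρc ρbc : (i : I) → (∀ j, S j) → Measure (S i))
    (hρc_prob : ∀ i x, IsProbabilityMeasure (ρc i x))
    (hρbc_prob : ∀ i x, IsProbabilityMeasure (ρbc i x))
    (hρc_meas : ∀ i (A : Set (S i)), MeasurableSet A → Measurable fun x => ρc i x A)
    (hρbc_meas : ∀ i (A : Set (S i)), MeasurableSet A → Measurable fun x => ρbc i x A)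
    -- `ρc i x` and `ρbc i x` depend on `x` only through the coordinates `x^{I∖{i}}`
    (hρc_loc : ∀ i (x x' : ∀ j, S j), (∀ j, j ≠ i → x j = x' j) → ρc i x = ρc i x')
    -- `ρc` is a version of the conditional distribution of `X^i` given `X^{I∖{i}}` under `ρ`:
    (hρc_cond : ∀ i (A : Set (S i)), MeasurableSet A →
      ∀ E : Set (∀ j, S j), MeasurableSet E →
        (∀ x x', (∀ j, j ≠ i → x j = x' j) → (x ∈ E ↔ x' ∈ E)) →
        ρ ({x | x i ∈ A} ∩ E) = ∫⁻ x in E, ρc i x A ∂ρ)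
    -- and similarly for `ρbc` under `ρb`:
    (hρbc_cond : ∀ i (A : Set (S i)), MeasurableSet A →
      ∀ E : Set (∀ j, S j), MeasurableSet E →
        (∀ x x', (∀ j, j ≠ i → x j = x' j) → (x ∈ E ↔ x' ∈ E)) →
        ρb ({x | x i ∈ A} ∩ E) = ∫⁻ x in E, ρbc i x A ∂ρb)
    (C : Matrix I I ℝ) (b : I → ℝ)
    (hC : ∀ i j, C i j = (1 / 2) * sSup { d : ℝ | ∃ x x' : ∀ l, S l,
      (∀ l, l ≠ j → x l = x' l) ∧ d = tvDist (ρc i x) (ρc i x') })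
    (hb : ∀ j, b j = sSup { d : ℝ | ∃ x : ∀ l, S l, d = tvDist (ρc j x) (ρbc j x) })
    (hdob : ∀ i, ∑ j, C i j < 1) :
    ∃ D : Matrix I I ℝ, (∀ i j, HasSum (fun n : ℕ => (C ^ n) i j) (D i j)) ∧
      ∀ J : Finset I, localTV (↑J : Set I) ρ ρb ≤ ∑ i ∈ J, ∑ j, D i j * b j := by
  let κ (i : I) : Kernel (∀ j, S j) (S i) :=
    ⟨fun x => ρc i x, Measure.measurable_of_measurable_coe _ (hρc_meas i)⟩
  let κb (i : I) : Kernel (∀ j, S j) (S i) :=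
    ⟨fun x => ρbc i x, Measure.measurable_of_measurable_coe _ (hρbc_meas i)⟩
  have (i : I) : IsMarkovKernel (κ i) := ⟨hρc_prob i⟩
  have (i : I) : IsMarkovKernel (κb i) := ⟨hρbc_prob i⟩
  have hCtv (i j : I) (x x' : ∀ l, S l) (hxx' : ∀ l, l ≠ j → x l = x' l) :
      tvDist (ρc i x) (ρc i x') ≤ 2 * C i j := by
    rw [hC, ← mul_assoc, mul_one_div_cancel two_ne_zero, one_mul]
    exact le_csSup ⟨2, by rintro _ ⟨y, y', -, rfl⟩; exact tvDist_le_two⟩ ⟨x, x', hxx', rfl⟩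
  have hbtv (j : I) (x : ∀ l, S l) : tvDist (ρc j x) (ρbc j x) ≤ b j := by
    rw [hb]
    exact le_csSup ⟨2, by rintro _ ⟨y, rfl⟩; exact tvDist_le_two⟩ ⟨x, rfl⟩
  have hC0 (i j : I) : 0 ≤ C i j := by
    rw [hC]
    exact mul_nonneg one_half_pos.le
      (Real.sSup_nonneg (by rintro _ ⟨_, _, _, rfl⟩; exact tvDist_nonneg))
  have hb0 : 0 ≤ b := fun j => by
    rw [hb]; exact Real.sSup_nonneg (by rintro _ ⟨_, rfl⟩; exact tvDist_nonneg)
  obtain ⟨D, hD, hDC, hD0⟩ := Matrix.exists_hasSum_pow hC0 hdob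
  obtain ⟨r, hr0, hr1, hrow⟩ := exists_nonneg_lt_one_forall_le hdob
  have hw0 : 0 ≤ D *ᵥ b := fun i => Finset.sum_nonneg fun j _ => mul_nonneg (hD0 i j) (hb0 j)
  have hw : D *ᵥ b = b + C *ᵥ (D *ᵥ b) := by
    conv_lhs => rw [hDC]
    rw [Matrix.add_mulVec, Matrix.one_mulVec, Matrix.mulVec_mulVec]
  exact ⟨D, hD, localTV_le_sum_of_isComparisonBound hw0 <| .of_dobrushin (κ := κ) (κb := κb)
    hρc_cond hρbc_cond hρc_loc hC0 hCtv hbtv hw0 hw hr0 hr1 hrow⟩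

/-- **Dobrushin comparison theorem** (Theorem 8.20 in Georgii, Theorem 3.3 of the paper).
Let `I` be a finite set and `𝕊 = ∏_{i ∈ I} S i` with each `S i` Polish.  Let `ρ` and `ρb` be
probability measures on `𝕊` with regular conditional distributions `ρc i x` and `ρbc i x` of the
`i`-th coordinate given the remaining coordinates `x^{I∖{i}}`.  Define
`C i j = (1/2) sup {‖ρc i x - ρc i x̄‖ : x, x̄ agree off j}` and
`b j = sup_x ‖ρc j x - ρbc j x‖`.  If the Dobrushin condition `max_i ∑_j C i j < 1` holds,
then the matrix `D = ∑_n C^n` is finite (entrywise summable), and for every `J ⊆ I`,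
`‖ρ - ρb‖_J ≤ ∑_{i ∈ J} ∑_{j ∈ I} D i j * b j`. -/
theorem dobrushin_comparison
    {I : Type*} [Fintype I] [DecidableEq I]
    {S : I → Type*} [∀ i, TopologicalSpace (S i)] [∀ i, PolishSpace (S i)]
    [∀ i, MeasurableSpace (S i)] [∀ i, BorelSpace (S i)]
    (ρ ρb : Measure (∀ i, S i)) [IsProbabilityMeasure ρ] [IsProbabilityMeasure ρb]
    (ρc ρbc : (i : I) → (∀ j, S j) → Measure (S i))
    (hρc_prob : ∀ i x, IsProbabilityMeasure (ρc i x))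
    (hρbc_prob : ∀ i x, IsProbabilityMeasure (ρbc i x))
    (hρc_meas : ∀ i (A : Set (S i)), MeasurableSet A → Measurable fun x => ρc i x A)
    (hρbc_meas : ∀ i (A : Set (S i)), MeasurableSet A → Measurable fun x => ρbc i x A)
    -- `ρc i x` and `ρbc i x` depend on `x` only through the coordinates `x^{I∖{i}}`
    (hρc_loc : ∀ i (x x' : ∀ j, S j), (∀ j, j ≠ i → x j = x' j) → ρc i x = ρc i x')
    (hρbc_loc : ∀ i (x x' : ∀ j, S j), (∀ j, j ≠ i → x j = x' j) → ρbc i x = ρbc i x')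
    -- `ρc` is a version of the conditional distribution of `X^i` given `X^{I∖{i}}` under `ρ`:
    (hρc_cond : ∀ i (A : Set (S i)), MeasurableSet A →
      ∀ E : Set (∀ j, S j), MeasurableSet E →
        (∀ x x', (∀ j, j ≠ i → x j = x' j) → (x ∈ E ↔ x' ∈ E)) →
        ρ ({x | x i ∈ A} ∩ E) = ∫⁻ x in E, ρc i x A ∂ρ)
    -- and similarly for `ρbc` under `ρb`:
    (hρbc_cond : ∀ i (A : Set (S i)), MeasurableSet A →
      ∀ E : Set (∀ j, S j), MeasurableSet E →
        (∀ x x', (∀ j, j ≠ i → x j = x' j) → (x ∈ E ↔ x' ∈ E)) →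
        ρb ({x | x i ∈ A} ∩ E) = ∫⁻ x in E, ρbc i x A ∂ρb)
    (C : Matrix I I ℝ) (b : I → ℝ)
    (hC : ∀ i j, C i j = (1 / 2) * sSup { d : ℝ | ∃ x x' : ∀ l, S l,
      (∀ l, l ≠ j → x l = x' l) ∧ d = tvDist (ρc i x) (ρc i x') })
    (hb : ∀ j, b j = sSup { d : ℝ | ∃ x : ∀ l, S l, d = tvDist (ρc j x) (ρbc j x) })
    (hdob : ∀ i, ∑ j, C i j < 1) :
    ∃ D : Matrix I I ℝ, (∀ i j, HasSum (fun n : ℕ => (C ^ n) i j) (D i j)) ∧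
      ∀ J : Finset I, localTV (↑J : Set I) ρ ρb ≤ ∑ i ∈ J, ∑ j, D i j * b j :=
  dobrushin_comparison_general ρ ρb ρc ρbc hρc_prob hρbc_prob hρc_meas hρbc_meas hρc_loc hρc_cond
    hρbc_cond C b hC hb hdob
end

section
/- Joint density of the Gaussian Markov random field from its conditional specification. Let V be a finite set with card(V) = m, let μ = (μ_v)_{v∈V} ∈ ℝ^m, let σ_v² > 0 for each v ∈ V, and let β = (β_{vv'})_{v,v'∈V} be real coefficients with β_{vv} = 0. Define the m × m matrix B = (b_{vv'}) by b_{vv'} = (δ_{vv'} − β_{vv'})/σ_v², where δ is the Kronecker delta, and assume B is symmetric and positive definite. Then the probability density f(x) = (det B)^{1/2} (2π)^{−m/2} exp(−(x−μ)ᵀ B (x−μ)/2) on ℝ^m (i.e., the multivariate normal density with mean μ and precision matrix B) has, for each v ∈ V, the full conditional density of the coordinate x^v given the remaining coordinates equal to the univariate normal density with mean μ_v + Σ_{v'≠v} β_{vv'}(x^{v'} − μ_{v'}) and variance σ_v², that is, f^v(x^v | x^{V∖{v}}) = (2πσ_v²)^{−1/2} exp(−(1/(2σ_v²))[x^v − μ_v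 − Σ_{v'≠v} β_{vv'}(x^{v'} − μ_{v'})]²). -/
open Real

/-- **Joint density of the Gaussian Markov random field from its conditional specification.**
Let `V` be a finite set with `card V = m`, `μ ∈ ℝ^m`, `σsq v > 0`, and coefficients `β` with
`β v v = 0`.  Define the `m × m` matrix `B` by `B v v' = (δ_{v v'} - β v v') / σsq v` and assume
`B` is symmetric and positive definite.  Then the multivariate normal density
`f x = (det B)^{1/2} (2π)^{-m/2} exp(-(x-μ)ᵀ B (x-μ)/2)` has, for each `v ∈ V`, full conditional
density of the coordinate `x v` given the remaining coordinates (i.e. `f x` divided by the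
marginal obtained by integrating out the coordinate `v`) equal to the univariate normal density
with mean `μ v + ∑_{v' ≠ v} β v v' * (x v' - μ v')` and variance `σsq v`. -/
theorem gmrf_conditional_density
    {V : Type*} [Fintype V] [DecidableEq V]
    (μ : V → ℝ) (σsq : V → ℝ) (hσ : ∀ v, 0 < σsq v)
    (β : V → V → ℝ) (hβdiag : ∀ v, β v v = 0)
    (B : Matrix V V ℝ)
    (hB : ∀ v v', B v v' = ((if v = v' then 1 else 0) - β v v') / σsq v)
    (hsymm : B.IsSymm) (hpos : B.PosDef)
    (f : (V → ℝ) → ℝ)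
    (hf : ∀ x, f x = Real.sqrt B.det * (2 * π) ^ (-(Fintype.card V : ℝ) / 2) *
      Real.exp (-(∑ v, ∑ v', (x v - μ v) * B v v' * (x v' - μ v')) / 2)) :
    ∀ (v : V) (x : V → ℝ),
      f x / (∫ t : ℝ, f (Function.update x v t)) =
        (Real.sqrt (2 * π * σsq v))⁻¹ *
          Real.exp (-(x v - μ v - ∑ v' ∈ Finset.univ.erase v, β v v' * (x v' - μ v')) ^ 2 /
            (2 * σsq v)) := by
  intro v x
  have hσv := hσ v
  set S : ℝ := ∑ v' ∈ Finset.univ.erase v, β v v' * (x v' - μ v') with hS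
  set a : ℝ := (σsq v)⁻¹ with ha
  have ha_pos : 0 < a := inv_pos.2 hσv
  set c : ℝ := μ v + S with hc
  set Q : ℝ := ∑ u, ∑ u', (x u - μ u) * B u u' * (x u' - μ u') with hQ
  have hBvv : B v v = a := by rw [hB]; simp [hβdiag, ha, one_div]
  -- the row sum identity
  have hLsum : ∑ u' : V, B v u' * (x u' - μ u') = a * ((x v - μ v) - S) := by
    have h1 : ∑ u' : V, β v u' * (x u' - μ u') = S := by
      rw [hS, ← Finset.add_sum_erase Finset.univ (fun u' => β v u' * (x u' - μ u'))
        (Finset.mem_univ v), hβdiag, zero_mul, zero_add]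
    simp_rw [hB v]
    have : ∀ u' : V, ((if v = u' then 1 else 0) - β v u') / σsq v * (x u' - μ u') =
        a * ((if u' = v then (x u' - μ u') else 0) - β v u' * (x u' - μ u')) := by
      intro u'
      rcases eq_or_ne u' v with h | h
      · subst h; rw [if_pos rfl, if_pos rfl, ha]; field_simp
      · rw [if_neg (Ne.symm h), if_neg h, ha]; field_simp; ring
    simp_rw [this, ← Finset.mul_sum, Finset.sum_sub_distrib, Finset.sum_ite_eq',
      Finset.mem_univ, if_true, h1]
  have hLsum' : ∑ u : V, (x u - μ u) * B u v = a * ((x v - μ v) - S) := by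
    rw [← hLsum]
    apply Finset.sum_congr rfl
    intro u _
    rw [hsymm.apply u v, mul_comm]
  -- key quadratic expansion
  have key : ∀ t : ℝ,
      (∑ u, ∑ u', (Function.update x v t u - μ u) * B u u' *
        (Function.update x v t u' - μ u')) = Q + a * ((t - c) ^ 2 - (x v - c) ^ 2) := by
    intro t
    have hupd : ∀ u : V, Function.update x v t u - μ u =
        (x u - μ u) + (t - x v) * (if u = v then 1 else 0) := by
      intro u
      rcases eq_or_ne u v with h | h
      · subst h
        rw [Function.update_self, if_pos rfl]
        ring
      · rw [Function.update_of_ne h, if_neg h]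
        ring
    simp_rw [hupd]
    have expand : ∀ u u' : V,
        ((x u - μ u) + (t - x v) * (if u = v then 1 else 0)) * B u u' *
          ((x u' - μ u') + (t - x v) * (if u' = v then 1 else 0)) =
        (x u - μ u) * B u u' * (x u' - μ u')
          + (if u = v then (t - x v) * (B u u' * (x u' - μ u')) else 0)
          + (if u' = v then ((x u - μ u) * B u u') * (t - x v) else 0)
          + (if u = v then (if u' = v then (t - x v) * B u u' * (t - x v) else 0) else 0) := by
      intro u u'
      split_ifs <;> ring
    simp_rw [expand, Finset.sum_add_distrib, Finset.sum_ite_irrel, Finset.sum_const_zero,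
      Finset.sum_ite_eq', Finset.mem_univ, if_true, ← Finset.mul_sum, ← Finset.sum_mul]
    rw [hLsum, hLsum', hBvv, ← hQ]
    have : t - c = (t - x v) + ((x v - μ v) - S) := by rw [hc]; ring
    rw [this]
    have : x v - c = (x v - μ v) - S := by rw [hc]; ring
    rw [this]
    ring
  -- pointwise formula for f on the updated point
  have hfupd : ∀ t : ℝ, f (Function.update x v t) =
      (f x * Real.exp (a * (x v - c) ^ 2 / 2)) * Real.exp (-(a / 2) * (t - c) ^ 2) := by
    intro t
    rw [hf (Function.update x v t), key t, hf x]
    rw [show -(Q + a * ((t - c) ^ 2 - (x v - c) ^ 2)) / 2 =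
      (-Q / 2) + (a * (x v - c) ^ 2 / 2) + (-(a / 2) * (t - c) ^ 2) by ring]
    rw [Real.exp_add, Real.exp_add]
    ring
  -- the Gaussian integral
  have hgauss : (∫ t : ℝ, Real.exp (-(a / 2) * (t - c) ^ 2)) = Real.sqrt (2 * π * σsq v) := by
    rw [MeasureTheory.integral_sub_right_eq_self (fun t => Real.exp (-(a / 2) * t ^ 2)) c,
      integral_gaussian]
    congr 1
    rw [ha]
    field_simp
  have hint : (∫ t : ℝ, f (Function.update x v t)) =
      (f x * Real.exp (a * (x v - c) ^ 2 / 2)) * Real.sqrt (2 * π * σsq v) := by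
    simp_rw [hfupd]
    rw [MeasureTheory.integral_const_mul, hgauss]
  have hfx_pos : 0 < f x := by
    rw [hf x]
    have h1 : 0 < Real.sqrt B.det := Real.sqrt_pos.2 hpos.det_pos
    have h2 : (0:ℝ) < (2 * π) ^ (-(Fintype.card V : ℝ) / 2) :=
      Real.rpow_pos_of_pos (by positivity) _
    positivity
  rw [hint]
  have hE : (0:ℝ) < Real.exp (a * (x v - c) ^ 2 / 2) := Real.exp_pos _
  have hG : (0:ℝ) < Real.sqrt (2 * π * σsq v) := Real.sqrt_pos.2 (by positivity)
  rw [show f x * Real.exp (a * (x v - c) ^ 2 / 2) * Real.sqrt (2 * π * σsq v) =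
    f x * (Real.exp (a * (x v - c) ^ 2 / 2) * Real.sqrt (2 * π * σsq v)) from mul_assoc _ _ _]
  rw [div_mul_eq_div_div, div_self (ne_of_gt hfx_pos), one_div, mul_inv,
    ← Real.exp_neg]
  rw [show x v - μ v - S = x v - c by rw [hc]; ring]
  rw [show -(a * (x v - c) ^ 2 / 2) = -(x v - c) ^ 2 / (2 * σsq v) by rw [ha]; ring]
  ring
end
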